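/- arXiv:2305.13699 — 4 statements merged into one kernel-verified Lean document; each statement's English description precedes it below -/
import Mathlib

section
/- Correctness of the MEMS multi-signature: if each signer i has secret key x_i with public key X_i = g^{x_i}, commitment R_i = g^{r_i}, the timestamp hash value is w with W = g^w, the joint commitment is U = W^n · ∏_{i=1}^n R_i, the challenge is c, the coefficients are a_i, the partial signatures are s_i = w + r_i + c·a_i·x_i, and the joint signature is s = ∑_{i=1}^n s_i, then g^s = U · (∏_{i=1}^n X_i^{a_i})^c. -/
/-!
Since `g` has order `p`, the map `k ↦ g ^ k.val` from `ZMod p` to `G` turns sums into products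
and products into iterated powers. Applying it to `s = ∑ (w + rᵢ + c aᵢ xᵢ)` splits `g ^ s`
into `W ^ n`, `∏ Rᵢ` and `∏ (Xᵢ ^ aᵢ) ^ c`.
-/

open Finset

section PowVal

variable {G : Type*} {g : G} {p : ℕ}

theorem pow_val_add [Monoid G] [NeZero p] (hg : orderOf g = p) (a b : ZMod p) :
    g ^ (a + b).val = g ^ a.val * g ^ b.val := by
  rw [ZMod.val_add, ← pow_add, ← pow_mod_orderOf g (a.val + b.val), hg]

theorem pow_val_mul [Monoid G] (hg : orderOf g = p) (a b : ZMod p) :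
    g ^ (a * b).val = (g ^ a.val) ^ b.val := by
  rw [ZMod.val_mul, ← pow_mul, ← pow_mod_orderOf g (a.val * b.val), hg]

theorem pow_val_sum [CommMonoid G] [NeZero p] (hg : orderOf g = p) {ι : Type*} (s : Finset ι)
    (f : ι → ZMod p) : g ^ (∑ i ∈ s, f i).val = ∏ i ∈ s, g ^ (f i).val := by
  classical
  induction s using Finset.induction_on with
  | empty => simp
  | insert i s hi ih => rw [sum_insert hi, prod_insert hi, pow_val_add hg, ih]

end PowVal

/-- Correctness of the MEMS multi-signature. -/
theorem mems_correctness
    {G : Type*} [CommGroup G] (g : G) (p : ℕ) [Fact p.Prime]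
    (hg : orderOf g = p) (n : ℕ)
    (x r a : Fin n → ZMod p) (w c : ZMod p) :
    g ^ (∑ i, (w + r i + c * a i * x i)).val =
      ((g ^ w.val) ^ n * ∏ i, g ^ (r i).val) *
        (∏ i, (g ^ (x i).val) ^ (a i).val) ^ c.val := by
  have partial_sig (i : Fin n) : g ^ (w + r i + c * a i * x i).val =
      g ^ w.val * g ^ (r i).val * ((g ^ (x i).val) ^ (a i).val) ^ c.val := by
    rw [show c * a i * x i = x i * a i * c by ring, pow_val_add hg, pow_val_add hg,
      pow_val_mul hg, pow_val_mul hg]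
  rw [pow_val_sum hg, prod_congr rfl fun i _ => partial_sig i, prod_mul_distrib,
    prod_mul_distrib, prod_const, card_univ, Fintype.card_fin, prod_pow]
end

section
/- Generalized forking lemma (probability bound): let A be a randomized algorithm taking input inp, random oracle answers h₁,…,h_q drawn uniformly from ZMod p, and random coins ρ, and returning either ⊥ or a pair (i, out) with 1 ≤ i ≤ q. Let acc(A) be its acceptance probability. Then the forking algorithm Fork^A, which runs A twice with the same coins and same h₁,…,h_{i−1} but fresh h_i',…,h_q', and succeeds when both runs accept with the same index i = i' and h_i ≠ h_i', succeeds with probability frk ≥ acc(A)·(acc(A)/q − 1/p). -/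
open scoped ENNReal

/-- The acceptance experiment for algorithm `A`. -/
noncomputable def accP {Inp Coins Out : Type*} (p q : ℕ) [NeZero p]
    (dInp : PMF Inp) (dCoins : PMF Coins)
    (A : Inp × (Fin q → ZMod p) × Coins → Option (Fin q × Out)) : PMF Bool :=
  dInp.bind fun inp => dCoins.bind fun ρ =>
    (PMF.uniformOfFintype (Fin q → ZMod p)).bind fun h =>
      PMF.pure (A (inp, h, ρ)).isSome

/-- The forking algorithm `Fork^A`: run `A`, and if it accepts with index `i`,
rerun it with the same coins and the same oracle answers before index `i`, but
fresh answers from `i` on; succeed iff the second run accepts with the same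
index and a different `i`-th oracle answer. -/
noncomputable def forkP {Inp Coins Out : Type*} (p q : ℕ) [NeZero p]
    (dInp : PMF Inp) (dCoins : PMF Coins)
    (A : Inp × (Fin q → ZMod p) × Coins → Option (Fin q × Out)) : PMF Bool :=
  dInp.bind fun inp => dCoins.bind fun ρ =>
    (PMF.uniformOfFintype (Fin q → ZMod p)).bind fun h =>
      match A (inp, h, ρ) with
      | none => PMF.pure false
      | some (i, _) =>
        (PMF.uniformOfFintype (Fin q → ZMod p)).bind fun h' =>
          match A (inp, fun j => if (j : ℕ) < (i : ℕ) then h j else h' j, ρ) with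
          | none => PMF.pure false
          | some (i', _) => PMF.pure (decide (i' = i ∧ h' i ≠ h i))

/-!
Fix the input and the coins, and write `B h` for the index returned by `A` on oracle answers `h`.
For an index `i`, let `Sᵢ` be the number of `h` with `B h = i`. Splitting `h` into its part
before `i` and its part from `i` on, Cauchy–Schwarz over the prefixes shows that at least `Sᵢ²`
pairs `(h, h')` satisfy `B h = B (splice i h h') = i`, and at most `Sᵢ · p ^ (q - 1)` of them
have `h' i = h i`. Summing over `i` and using Cauchy–Schwarz once more gives
`p·acc² ≤ p·q·frk + q·acc` for fixed input and coins. This quadratic inequality survives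
averaging over inputs and coins by Jensen's inequality `(𝔼 X)² ≤ 𝔼 X²`, and it rearranges
to `acc · (acc / q - 1 / p) ≤ frk`.
-/

open Finset
open scoped NNReal

theorem ENNReal.two_mul_le_add_sq (a b : ℝ≥0∞) : 2 * a * b ≤ a ^ 2 + b ^ 2 := by
  rcases eq_or_ne a ∞ with rfl | ha
  · simp
  rcases eq_or_ne b ∞ with rfl | hb
  · simp
  lift a to ℝ≥0 using ha
  lift b to ℝ≥0 using hb
  exact_mod_cast _root_.two_mul_le_add_sq a b

theorem ENNReal.mul_sub_le_of_mul_sq_le {a f p q : ℝ≥0∞} (hp₀ : p ≠ 0) (hp : p ≠ ∞)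
    (ha : a ≠ ∞) (h : p * a ^ 2 ≤ p * q * f + q * a) : a * (a / q - 1 / p) ≤ f := by
  have hsq : a ^ 2 ≤ (f + a / p) * q := by
    refine (ENNReal.mul_le_mul_iff_right hp₀ hp).1 (h.trans_eq ?_)
    calc p * q * f + q * a = p * q * f + q * (p * (a / p)) := by
          rw [ENNReal.mul_div_cancel hp₀ hp]
      _ = p * ((f + a / p) * q) := by ring
  calc a * (a / q - 1 / p) = a ^ 2 / q - a / p := by
        rw [ENNReal.mul_sub fun _ _ => ha, mul_div_assoc', sq, mul_one_div]
    _ ≤ f := tsub_le_iff_right.2 (ENNReal.div_le_of_le_mul hsq)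

namespace PMF

variable {α β : Type*}

theorem bind_apply_sq_le (μ : PMF α) (f : α → PMF β) (b : β) :
    μ.bind f b ^ 2 ≤ ∑' a, μ a * f a b ^ 2 := by
  set m := μ.bind f b with hm
  have hm_top : m ^ 2 ≠ ∞ := ENNReal.pow_ne_top (apply_ne_top _ _)
  refine ENNReal.le_of_add_le_add_right hm_top ?_
  calc m ^ 2 + m ^ 2 = ∑' a, μ a * (2 * m * f a b) := by
        simp_rw [mul_left_comm (μ _), ENNReal.tsum_mul_left, ← bind_apply, ← hm]; ring
    _ ≤ ∑' a, μ a * (f a b ^ 2 + m ^ 2) := ENNReal.tsum_le_tsum fun a => by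
      gcongr
      exact (ENNReal.two_mul_le_add_sq m (f a b)).trans_eq (add_comm _ _)
    _ = ∑' a, μ a * f a b ^ 2 + m ^ 2 := by
        simp_rw [mul_add, ENNReal.tsum_add, ENNReal.tsum_mul_right, tsum_coe, one_mul]

theorem mul_sq_bind_apply_le (μ : PMF α) (f g : α → PMF β) (b b' : β) {c d e : ℝ≥0∞}
    (h : ∀ a, c * f a b ^ 2 ≤ d * g a b' + e * f a b) :
    c * μ.bind f b ^ 2 ≤ d * μ.bind g b' + e * μ.bind f b :=
  calc c * μ.bind f b ^ 2 ≤ c * ∑' a, μ a * f a b ^ 2 := by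
        gcongr
        exact bind_apply_sq_le μ f b
    _ = ∑' a, μ a * (c * f a b ^ 2) := by rw [← ENNReal.tsum_mul_left]; simp_rw [mul_left_comm]
    _ ≤ ∑' a, μ a * (d * g a b' + e * f a b) :=
        ENNReal.tsum_le_tsum fun a => by gcongr; exact h a
    _ = d * μ.bind g b' + e * μ.bind f b := by
        simp_rw [mul_add, ENNReal.tsum_add, mul_left_comm (μ _), ENNReal.tsum_mul_left, bind_apply]

theorem uniformOfFintype_bind_apply [Fintype α] [Nonempty α] (f : α → PMF β) (b : β) :
    (uniformOfFintype α).bind f b = (∑ a, f a b) / Fintype.card α := by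
  rw [bind_apply, tsum_fintype, ENNReal.div_eq_inv_mul, mul_sum]
  simp only [uniformOfFintype_apply]

end PMF

theorem sum_card_filter_eq_card_filter_prod {β γ : Type*} [Fintype β] [Fintype γ]
    (r : β → γ → Prop) [∀ b c, Decidable (r b c)] :
    ∑ b, #{c | r b c} = #{x : β × γ | r x.1 x.2} := by
  simp only [card_filter, Fintype.sum_prod_type]

/-- Cauchy–Schwarz `(∑ₐ cₐ)² ≤ |P| ∑ₐ cₐ²` for the fibre sizes `cₐ` over the first coordinate:
the right-hand side counts the pairs of elements of `g` with equal first coordinates, each once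
for every choice of the unused first coordinate `y.2.1`. -/
theorem sq_card_filter_le_card_filter_collision {P S : Type*} [Fintype P] [Fintype S]
    (g : P × S → Prop) [DecidablePred g] :
    #{x | g x} ^ 2 ≤ #{y : (P × S) × (P × S) | g y.1 ∧ g (y.1.1, y.2.2)} := by
  set c : P → ℕ := fun a => #{b | g (a, b)}
  have hlhs : #{x | g x} = ∑ a, c a :=
    (sum_card_filter_eq_card_filter_prod fun a b => g (a, b)).symm
  have hrhs : #{y : (P × S) × (P × S) | g y.1 ∧ g (y.1.1, y.2.2)}
      = ∑ a, Fintype.card P * c a ^ 2 := by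
    calc _ = ∑ a, ∑ b, ∑ _a' : P, ∑ b', if g (a, b) ∧ g (a, b') then 1 else 0 := by
          simp only [card_filter, Fintype.sum_prod_type]
      _ = _ := by
          refine sum_congr rfl fun a _ => ?_
          simp only [sum_const, card_univ, smul_eq_mul, ← mul_sum, c, card_filter, sq,
            sum_mul_sum, ite_zero_mul_ite_zero, mul_one]
  rw [hlhs, hrhs, ← mul_sum]
  simpa using sq_sum_le_card_mul_sum_sq (s := univ) (f := c)

section Forking

variable {α : Type*} {q : ℕ}

def splice (i : Fin q) (h h' : Fin q → α) : Fin q → α :=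
  fun j => if (j : ℕ) < (i : ℕ) then h j else h' j

variable [Fintype α]

theorem sq_card_filter_le_card_filter_splice (i : Fin q) (s : (Fin q → α) → Prop)
    [DecidablePred s] :
    #{h | s h} ^ 2 ≤
      #{x : (Fin q → α) × (Fin q → α) | s x.1 ∧ s (splice i x.1 x.2)} := by
  let e := Equiv.piEquivPiSubtypeProd (fun j : Fin q => (j : ℕ) < i) (fun _ => α)
  have he : ∀ h h', splice i h h' = e.symm ((e h).1, (e h').2) := by
    intro h h'
    ext j
    simp only [splice, e, Equiv.piEquivPiSubtypeProd_symm_apply, Equiv.piEquivPiSubtypeProd_apply]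
    split_ifs <;> rfl
  rw [card_equiv e (t := {x | s (e.symm x)}) (by simp),
    card_equiv (e.prodCongr e) (t := {y | s (e.symm y.1) ∧ s (e.symm (y.1.1, y.2.2))})
      (by simp [he])]
  exact sq_card_filter_le_card_filter_collision (fun x => s (e.symm x))

theorem card_mul_card_filter_apply_eq [DecidableEq α] (i : Fin q) (s : (Fin q → α) → Prop)
    [DecidablePred s] :
    Fintype.card α * #{x : (Fin q → α) × (Fin q → α) | s x.1 ∧ x.2 i = x.1 i}
      = #{h | s h} * Fintype.card α ^ q := by
  have hfib : ∀ a : α, #{h' : Fin q → α | h' i = a} = Fintype.card α ^ (q - 1) := by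
    intro a
    simpa using Fintype.card_filter_piFinset_const_eq_of_mem (univ : Finset α) i (mem_univ a)
  have hcount : #{x : (Fin q → α) × (Fin q → α) | s x.1 ∧ x.2 i = x.1 i}
      = #{h | s h} * Fintype.card α ^ (q - 1) := by
    simp only [card_filter, Fintype.sum_prod_type, ite_and, sum_ite_irrel, sum_const_zero]
    simp only [hfib, ← sum_filter, sum_const, smul_eq_mul, mul_one]
  rw [hcount, mul_left_comm, ← pow_succ', Nat.sub_add_cancel i.pos]

theorem card_filter_exists_eq_some {β ι : Type*} [Fintype β] [Fintype ι] [DecidableEq ι]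
    (f : β → Option ι) (r : β → ι → Prop) [∀ b i, Decidable (r b i)] :
    #{b | ∃ i, f b = some i ∧ r b i} = ∑ i, #{b | f b = some i ∧ r b i} := by
  classical
  rw [← card_biUnion]
  · congr 1
    ext b
    simp
  · intro i _ j _ hij
    exact disjoint_filter.2 fun b _ hi hj => hij (Option.some_injective _ (hi.1.symm.trans hj.1))

/-- `Fork^A` succeeds when its runs draw `h` and `h'` and `B` is the index part of `A`'s output. -/
def IsFork (B : (Fin q → α) → Option (Fin q)) (h h' : Fin q → α) : Prop :=
  ∃ i, B h = some i ∧ B (splice i h h') = some i ∧ h' i ≠ h i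

omit [Fintype α] in
theorem isFork_iff_of_eq_some {B : (Fin q → α) → Option (Fin q)} {h h' : Fin q → α}
    {i : Fin q} (hi : B h = some i) :
    IsFork B h h' ↔ B (splice i h h') = some i ∧ h' i ≠ h i := by
  simp [IsFork, hi]

variable [DecidableEq α] (B : (Fin q → α) → Option (Fin q))

instance : DecidableRel (IsFork B) := fun h h' =>
  inferInstanceAs (Decidable (∃ i, B h = some i ∧ B (splice i h h') = some i ∧ h' i ≠ h i))

theorem card_mul_sq_card_filter_eq_some_le (i : Fin q) :
    Fintype.card α * #{h | B h = some i} ^ 2 ≤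
      Fintype.card α *
          #{x : (Fin q → α) × (Fin q → α) |
            B x.1 = some i ∧ B (splice i x.1 x.2) = some i ∧ x.2 i ≠ x.1 i}
        + #{h | B h = some i} * Fintype.card α ^ q := by
  rw [← card_mul_card_filter_apply_eq i, ← mul_add]
  gcongr
  refine (sq_card_filter_le_card_filter_splice i _).trans
    ((card_le_card fun x => ?_).trans (card_union_le _ _))
  simp only [mem_filter, mem_univ, true_and, mem_union]
  tauto

theorem card_mul_sq_card_filter_isSome_le :
    Fintype.card α * #{h | (B h).isSome} ^ 2 ≤
      q * (Fintype.card α * #{x : (Fin q → α) × (Fin q → α) | IsFork B x.1 x.2}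
        + #{h | (B h).isSome} * Fintype.card α ^ q) := by
  have hacc : #{h | (B h).isSome} = ∑ i, #{h | B h = some i} := by
    simpa [Option.isSome_iff_exists] using card_filter_exists_eq_some B (fun _ _ => True)
  have hfork : #{x : (Fin q → α) × (Fin q → α) | IsFork B x.1 x.2}
      = ∑ i, #{x : (Fin q → α) × (Fin q → α) |
          B x.1 = some i ∧ B (splice i x.1 x.2) = some i ∧ x.2 i ≠ x.1 i} := by
    convert card_filter_exists_eq_some (fun x : (Fin q → α) × (Fin q → α) => B x.1)
      (fun x i => B (splice i x.1 x.2) = some i ∧ x.2 i ≠ x.1 i) using 3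
    exact Iff.rfl
  calc Fintype.card α * #{h | (B h).isSome} ^ 2
      ≤ Fintype.card α * (q * ∑ i, #{h | B h = some i} ^ 2) := by
        rw [hacc]
        gcongr
        simpa using sq_sum_le_card_mul_sum_sq (s := univ) (f := fun i => #{h | B h = some i})
    _ = q * ∑ i, Fintype.card α * #{h | B h = some i} ^ 2 := by rw [mul_left_comm, mul_sum]
    _ ≤ q * ∑ i, (Fintype.card α * #{x : (Fin q → α) × (Fin q → α) |
            B x.1 = some i ∧ B (splice i x.1 x.2) = some i ∧ x.2 i ≠ x.1 i}
          + #{h | B h = some i} * Fintype.card α ^ q) := by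
        gcongr with i
        exact card_mul_sq_card_filter_eq_some_le B i
    _ = _ := by rw [hfork, hacc, sum_add_distrib, mul_sum, sum_mul]

end Forking

section Conditioning

variable {Inp Coins Out : Type*} {p q : ℕ} [NeZero p] (dInp : PMF Inp) (dCoins : PMF Coins)
  (A : Inp × (Fin q → ZMod p) × Coins → Option (Fin q × Out))

theorem accP_eq_bind : accP p q dInp dCoins A =
    dInp.bind fun inp => dCoins.bind fun ρ => accP p q (PMF.pure inp) (PMF.pure ρ) A := by
  simp only [accP, PMF.pure_bind]

theorem forkP_eq_bind : forkP p q dInp dCoins A =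
    dInp.bind fun inp => dCoins.bind fun ρ => forkP p q (PMF.pure inp) (PMF.pure ρ) A := by
  simp only [forkP, PMF.pure_bind]

variable (inp : Inp) (ρ : Coins)

theorem accP_pure_apply_true :
    accP p q (PMF.pure inp) (PMF.pure ρ) A true
      = #{h | ((A (inp, h, ρ)).map Prod.fst).isSome} * ((p : ℝ≥0∞) ^ q)⁻¹ := by
  simp only [accP, PMF.pure_bind, PMF.uniformOfFintype_bind_apply, Fintype.card_fun, ZMod.card,
    Fintype.card_fin, natCast_card_filter, div_eq_mul_inv, PMF.pure_apply, Option.isSome_map,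
    @eq_comm _ true, Nat.cast_pow]

theorem forkP_pure_apply_true :
    forkP p q (PMF.pure inp) (PMF.pure ρ) A true
      = #{x : (Fin q → ZMod p) × (Fin q → ZMod p) |
          IsFork (fun h => (A (inp, h, ρ)).map Prod.fst) x.1 x.2}
        * ((p : ℝ≥0∞) ^ q)⁻¹ * ((p : ℝ≥0∞) ^ q)⁻¹ := by
  have hcard : (Fintype.card (Fin q → ZMod p) : ℝ≥0∞) = (p : ℝ≥0∞) ^ q := by simp
  simp only [forkP, PMF.pure_bind, PMF.uniformOfFintype_bind_apply, hcard, div_eq_mul_inv]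
  congr 1
  rw [← sum_card_filter_eq_card_filter_prod, Nat.cast_sum, sum_mul]
  refine sum_congr rfl fun h _ => ?_
  rcases hA : A (inp, h, ρ) with _ | ⟨i, o⟩
  · simp [IsFork, hA]
  · simp only
    rw [PMF.uniformOfFintype_bind_apply, hcard, natCast_card_filter, div_eq_mul_inv]
    congr 1
    refine sum_congr rfl fun h' _ => ?_
    have hB : (A (inp, h, ρ)).map Prod.fst = some i := by simp [hA]
    simp only [isFork_iff_of_eq_some (B := fun h => (A (inp, h, ρ)).map Prod.fst) hB]
    unfold splice
    split <;> simp_all [PMF.pure_apply]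

theorem mul_sq_accP_pure_le :
    p * accP p q (PMF.pure inp) (PMF.pure ρ) A true ^ 2
      ≤ p * q * forkP p q (PMF.pure inp) (PMF.pure ρ) A true
        + q * accP p q (PMF.pure inp) (PMF.pure ρ) A true := by
  set B : (Fin q → ZMod p) → Option (Fin q) := fun h => (A (inp, h, ρ)).map Prod.fst
  set T := #{h | (B h).isSome}
  set F := #{x : (Fin q → ZMod p) × (Fin q → ZMod p) | IsFork B x.1 x.2}
  set N : ℝ≥0∞ := (p : ℝ≥0∞) ^ q
  have hN₀ : N ≠ 0 := pow_ne_zero _ (by exact_mod_cast NeZero.ne p)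
  have hN : N ≠ ∞ := ENNReal.pow_ne_top (ENNReal.natCast_ne_top _)
  have key : (p : ℝ≥0∞) * T ^ 2 ≤ q * (p * F + T * (p : ℝ≥0∞) ^ q) := by
    have hcount := card_mul_sq_card_filter_isSome_le B
    rw [ZMod.card] at hcount
    exact_mod_cast hcount
  rw [accP_pure_apply_true, forkP_pure_apply_true]
  calc (p : ℝ≥0∞) * (T * N⁻¹) ^ 2 = p * T ^ 2 * (N⁻¹ * N⁻¹) := by ring
    _ ≤ q * (p * F + T * N) * (N⁻¹ * N⁻¹) := by gcongr
    _ = p * q * (F * N⁻¹ * N⁻¹) + q * (T * N⁻¹) * (N * N⁻¹) := by ring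
    _ = _ := by rw [ENNReal.mul_inv_cancel hN₀ hN, mul_one]

end Conditioning

theorem generalized_forking_lemma_general {Inp Coins Out : Type*} (p q : ℕ)
    [NeZero p]
    (dInp : PMF Inp) (dCoins : PMF Coins)
    (A : Inp × (Fin q → ZMod p) × Coins → Option (Fin q × Out)) :
    forkP p q dInp dCoins A true ≥
      accP p q dInp dCoins A true *
        (accP p q dInp dCoins A true / (q : ℝ≥0∞) - 1 / (p : ℝ≥0∞)) := by
  have key : (p : ℝ≥0∞) * accP p q dInp dCoins A true ^ 2
      ≤ p * q * forkP p q dInp dCoins A true + q * accP p q dInp dCoins A true := by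
    rw [accP_eq_bind, forkP_eq_bind]
    exact PMF.mul_sq_bind_apply_le dInp _ _ _ _ fun inp =>
      PMF.mul_sq_bind_apply_le dCoins _ _ _ _ fun ρ => mul_sq_accP_pure_le A inp ρ
  exact ENNReal.mul_sub_le_of_mul_sq_le (by exact_mod_cast NeZero.ne p)
    (ENNReal.natCast_ne_top p) (PMF.apply_ne_top _ _) key

/-- Generalized forking lemma: `frk ≥ acc(A) · (acc(A)/q − 1/p)`. -/
theorem generalized_forking_lemma {Inp Coins Out : Type*} (p q : ℕ)
    [Fact p.Prime] [NeZero p] (hq : 1 ≤ q)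
    (dInp : PMF Inp) (dCoins : PMF Coins)
    (A : Inp × (Fin q → ZMod p) × Coins → Option (Fin q × Out)) :
    forkP p q dInp dCoins A true ≥
      accP p q dInp dCoins A true *
        (accP p q dInp dCoins A true / (q : ℝ≥0∞) - 1 / (p : ℝ≥0∞)) :=
  generalized_forking_lemma_general p q dInp dCoins A
end

section
/- Splitting-lemma-style core of the forking lemma: let X, Y be finite nonempty types with Y = ZMod p, and let f : X × Y → Option (Fin q) with acceptance probability ε = P[f(x,y) ≠ ⊥] under the uniform distribution. Then the probability that two independent samples y, y' (with the same x) satisfy f(x,y) = some i, f(x,y') = some i, and y ≠ y' for some common index i, is at least ε·(ε/q − 1/|Y|). -/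
open scoped Classical

/-!
Write `N x i` for the number of `y` with `f (x, y) = some i`. Accepted pairs are counted by
`∑ N x i`, and the triples of the event by `∑ N x i * (N x i - 1)`, since for fixed `x` they
are the off-diagonal pairs of the fibres. Cauchy–Schwarz over the `|X| * q` indices `(x, i)`
gives `∑ N x i ^ 2 ≥ (∑ N x i) ^ 2 / (|X| * q)`, which is the bound after dividing by
`|X| * |Y| ^ 2`.
-/

open Finset

section Counting

variable {α β ι : Type*} [Fintype α] [Fintype β] [Fintype ι]

theorem card_filter_prod_eq_sum (p : α × β → Prop) [DecidablePred p] :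
    #{t | p t} = ∑ a, #{b | p (a, b)} := by
  simp only [card_filter, Fintype.sum_prod_type]

variable [DecidableEq α] [DecidableEq ι] (g : α → Option ι)

theorem card_filter_isSome_eq_sum_card_fiber :
    #{a | (g a).isSome} = ∑ i, #{a | g a = some i} := by
  rw [← card_biUnion]
  · congr 1
    ext a
    simp [Option.isSome_iff_exists]
  · intro i _ j _ hij
    simp only [Function.onFun, disjoint_left, mem_filter]
    grind

theorem card_filter_eq_some_ne_eq_sum_card_offDiag
    [DecidablePred fun ab : α × α => ∃ i, g ab.1 = some i ∧ g ab.2 = some i ∧ ab.1 ≠ ab.2] :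
    #{ab : α × α | ∃ i, g ab.1 = some i ∧ g ab.2 = some i ∧ ab.1 ≠ ab.2} =
      ∑ i, #({a | g a = some i} : Finset α).offDiag := by
  rw [← card_biUnion]
  · congr 1
    ext ⟨a, b⟩
    simp [mem_offDiag]
  · intro i _ j _ hij
    simp only [Function.onFun, disjoint_left, mem_offDiag, mem_filter]
    grind

end Counting

theorem Finset.cast_card_offDiag {α R : Type*} [Ring R] [DecidableEq α] (s : Finset α) :
    (#s.offDiag : R) = #s ^ 2 - #s := by
  rw [offDiag_card, Nat.cast_sub (Nat.le_mul_self _), Nat.cast_mul, sq]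

theorem div_mul_div_sub_le_of_sq_le_mul {n m q S T : ℝ} (hn : 0 ≤ n) (hm : 0 ≤ m) (hq : 0 ≤ q)
    (hST : S ≤ T) (hCS : S ^ 2 ≤ n * q * T) :
    S / (n * m) * (S / (n * m) / q - 1 / m) ≤ (T - S) / (n * m * m) := by
  rcases hn.eq_or_lt with rfl | hn
  · simp
  rcases hm.eq_or_lt with rfl | hm
  · simp
  rcases hq.eq_or_lt with rfl | hq
  · have : S = 0 := by nlinarith
    subst this
    simp only [zero_div, zero_mul, sub_zero]
    positivity
  have expand : S / (n * m) * (S / (n * m) / q - 1 / m) = (S ^ 2 / (n * q) - S) / (n * m * m) := by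
    field_simp
  rw [expand]
  gcongr (?_ - S) / _
  rw [div_le_iff₀ (by positivity)]
  linarith

theorem forking_core_general
    (X Y : Type*) [Fintype X] [Fintype Y]
    (q : ℕ) (f : X × Y → Option (Fin q)) (ε : ℝ)
    (hε : ε = ((Finset.univ.filter fun xy : X × Y => (f xy).isSome).card : ℝ) /
        ((Fintype.card X : ℝ) * (Fintype.card Y : ℝ))) :
    ((Finset.univ.filter fun t : X × Y × Y =>
        ∃ i, f (t.1, t.2.1) = some i ∧ f (t.1, t.2.2) = some i ∧ t.2.1 ≠ t.2.2).card : ℝ) /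
        ((Fintype.card X : ℝ) * (Fintype.card Y : ℝ) * (Fintype.card Y : ℝ)) ≥
      ε * (ε / (q : ℝ) - 1 / (Fintype.card Y : ℝ)) := by
  set N : X × Fin q → ℝ := fun xi => #{y | f (xi.1, y) = some xi.2}
  have h_accept : (#{xy | (f xy).isSome} : ℝ) = ∑ xi, N xi := by
    rw [card_filter_prod_eq_sum, Fintype.sum_prod_type]
    push_cast [card_filter_isSome_eq_sum_card_fiber]
    rfl
  have h_fork : (#{t : X × Y × Y | ∃ i, f (t.1, t.2.1) = some i ∧ f (t.1, t.2.2) = some i ∧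
      t.2.1 ≠ t.2.2} : ℝ) = ∑ xi, N xi ^ 2 - ∑ xi, N xi := by
    rw [card_filter_prod_eq_sum, Fintype.sum_prod_type, Fintype.sum_prod_type, ← sum_sub_distrib]
    push_cast
    refine sum_congr rfl fun x _ => ?_
    rw [card_filter_eq_some_ne_eq_sum_card_offDiag (fun y => f (x, y))]
    push_cast [Finset.cast_card_offDiag, sum_sub_distrib]
    rfl
  have h_sq : ∑ xi, N xi ≤ ∑ xi, N xi ^ 2 := sum_le_sum fun xi _ => by
    simp only [N]
    exact_mod_cast Nat.le_self_pow two_ne_zero _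
  have h_cs : (∑ xi, N xi) ^ 2 ≤ Fintype.card X * q * ∑ xi, N xi ^ 2 := by
    simpa using sq_sum_le_card_mul_sum_sq (s := univ) (f := N)
  rw [hε, h_accept, h_fork, ge_iff_le]
  exact div_mul_div_sub_le_of_sq_le_mul (by positivity) (by positivity) (by positivity)
    h_sq h_cs

/-- Splitting-lemma-style core of the forking lemma (single-splice abstraction). -/
theorem forking_core
    (X Y : Type*) [Fintype X] [Fintype Y] [Nonempty X] [Nonempty Y]
    (q : ℕ) (hq : 1 ≤ q) (f : X × Y → Option (Fin q)) (ε : ℝ)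
    (hε : ε = ((Finset.univ.filter fun xy : X × Y => (f xy).isSome).card : ℝ) /
        ((Fintype.card X : ℝ) * (Fintype.card Y : ℝ))) :
    ((Finset.univ.filter fun t : X × Y × Y =>
        ∃ i, f (t.1, t.2.1) = some i ∧ f (t.1, t.2.2) = some i ∧ t.2.1 ≠ t.2.2).card : ℝ) /
        ((Fintype.card X : ℝ) * (Fintype.card Y : ℝ) * (Fintype.card Y : ℝ)) ≥
      ε * (ε / (q : ℝ) - 1 / (Fintype.card Y : ℝ)) :=
  forking_core_general X Y q f ε hε
end

section
/- Extraction of the honest signer's secret key from two aggregated discrete logs: suppose X̃ = X^{a·c} · B and X̃' = X^{a·c'} · B for the same group element B, where X = g^x has prime order p, and suppose x̃, x̃' ∈ ZMod p satisfy g^{x̃} = X̃ and g^{x̃'} = X̃' with a·c ≠ a·c'. Then x = (x̃ − x̃')·(a·c − a·c')⁻¹. -/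
/-!
Writing `X = g ^ x`, the common factor `B` cancels from the right:
`g ^ x̃ = X ^ (a c - a c') * X ^ (a c') * B = g ^ (x (a c - a c')) * g ^ x̃'`.
Since `k ↦ g ^ k` is injective on `ZMod p` when `g` has order `p`, this gives
`x̃ - x̃' = x (a c - a c')`, and `a c - a c'` is invertible in the field `ZMod p`.
-/

section PowVal

variable {G : Type*} [Group G] {g : G} {n : ℕ}

theorem pow_mod_of_orderOf_eq (hg : orderOf g = n) (k : ℕ) : g ^ (k % n) = g ^ k :=
  hg ▸ pow_mod_orderOf g k

theorem pow_val_pow_val (hg : orderOf g = n) (a b : ZMod n) :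
    (g ^ a.val) ^ b.val = g ^ (a * b).val := by
  rw [← pow_mul, ZMod.val_mul, pow_mod_of_orderOf_eq hg]

variable [NeZero n]

theorem pow_val_eq_pow_val_iff (hg : orderOf g = n) {a b : ZMod n} :
    g ^ a.val = g ^ b.val ↔ a = b := by
  rw [pow_eq_pow_iff_modEq, hg, ← ZMod.natCast_eq_natCast_iff, ZMod.natCast_zmod_val,
    ZMod.natCast_zmod_val]

theorem pow_val_mul_pow_val (hg : orderOf g = n) (a b : ZMod n) :
    g ^ a.val * g ^ b.val = g ^ (a + b).val := by
  rw [← pow_add, ZMod.val_add, pow_mod_of_orderOf_eq hg]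

end PowVal

theorem extract_honest_key_general
    {G : Type*} [Group G] (g : G) (p : ℕ) [Fact p.Prime]
    (hg : orderOf g = p) (x a c c' xt xt' : ZMod p)
    (X B : G) (hX : X = g ^ x.val)
    (h1 : g ^ xt.val = X ^ (a * c).val * B)
    (h2 : g ^ xt'.val = X ^ (a * c').val * B)
    (hne : a * c ≠ a * c') :
    x = (xt - xt') * (a * c - a * c')⁻¹ := by
  subst hX
  have hsplit : g ^ xt.val = g ^ (x * (a * c - a * c') + xt').val :=
    calc g ^ xt.val = (g ^ x.val) ^ (a * c).val * B := h1
      _ = g ^ (x * (a * c - a * c') + x * (a * c')).val * B := by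
        rw [pow_val_pow_val hg, mul_sub, sub_add_cancel]
      _ = g ^ (x * (a * c - a * c')).val * ((g ^ x.val) ^ (a * c').val * B) := by
        rw [← pow_val_mul_pow_val hg, pow_val_pow_val hg, mul_assoc]
      _ = g ^ (x * (a * c - a * c') + xt').val := by
        rw [← h2, pow_val_mul_pow_val hg]
  have hdiff : xt - xt' = x * (a * c - a * c') := by
    rw [(pow_val_eq_pow_val_iff hg).mp hsplit, add_sub_cancel_right]
  rw [hdiff, mul_inv_cancel_right₀ (sub_ne_zero.mpr hne)]

/-- Extraction of the honest signer's secret key from two aggregated discrete logs. -/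
theorem extract_honest_key
    {G : Type*} [Group G] (g : G) (p : ℕ) [Fact p.Prime]
    (hg : orderOf g = p) (x b a c c' xt xt' : ZMod p)
    (X B : G) (hX : X = g ^ x.val) (hB : B = g ^ b.val)
    (h1 : g ^ xt.val = X ^ (a * c).val * B)
    (h2 : g ^ xt'.val = X ^ (a * c').val * B)
    (hne : a * c ≠ a * c') :
    x = (xt - xt') * (a * c - a * c')⁻¹ :=
  extract_honest_key_general g p hg x a c c' xt xt' X B hX h1 h2 hne
end
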